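/- Let n ≥ 1 and N ≥ 1 be integers and let P ∈ ℚ[x₁, …, xₙ] be a polynomial, written as a finite sum P = Σ_a λ_a x₁^{a₁−1}⋯xₙ^{aₙ−1} over multi-indices a = (a₁, …, aₙ) with all aᵢ ≥ 1 and λ_a ∈ ℚ. Assume the function F = P/(1 − x₁⋯xₙ)^N is Lebesgue-integrable on (0,1)ⁿ. Define R : ℕ → ℚ by R(k) = Σ_a λ_a · C(k+N−1, N−1) / ((k+a₁)(k+a₂)⋯(k+aₙ)), where C(·,·) denotes the binomial coefficient. Then the series Σ_{k=0}^∞ R(k) converges absolutely and ∫_{(0,1)ⁿ} F dx₁⋯dxₙ = Σ_{k=0}^∞ R(k). -/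

import Mathlib

/-!
Expanding `1 / (1 - t) ^ N = ∑ₖ C(k+N-1, N-1) tᵏ` with `t = x₁⋯xₙ ∈ [0, 1)` turns the integrand
into a series of polynomials whose integrals over the cube are the terms `R k`. The coefficients
of this expansion are nonnegative, so the partial sums of the series of absolute values are
dominated by `|F|`, which is integrable; integration and summation then commute.
-/

open MeasureTheory

/-- The open unit cube `(0,1)^n` in `ℝ^n`. -/
def unitCube (n : ℕ) : Set (Fin n → ℝ) := Set.univ.pi fun _ => Set.Ioo (0 : ℝ) 1

section TermwiseIntegration

variable {α E : Type*} [MeasurableSpace α] {μ : Measure α}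
  [NormedAddCommGroup E]

lemma summable_integral_norm_of_hasSum_norm {f : ℕ → α → E} {F : α → E}
    (hf : ∀ k, Integrable (f k) μ) (hF : Integrable F μ)
    (h_norm : ∀ᵐ x ∂μ, HasSum (fun k => ‖f k x‖) ‖F x‖) :
    Summable fun k => ∫ x, ‖f k x‖ ∂μ := by
  refine summable_of_sum_range_le (c := ∫ x, ‖F x‖ ∂μ)
    (fun k => integral_nonneg fun x => norm_nonneg _) fun K => ?_
  rw [← integral_finsetSum _ fun k _ => (hf k).norm]
  exact integral_mono_ae (integrable_finsetSum _ fun k _ => (hf k).norm) hF.norm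
    (h_norm.mono fun x hx => sum_le_hasSum _ (fun _ _ => norm_nonneg _) hx)

lemma hasSum_integral_of_hasSum_norm [NormedSpace ℝ E] [CompleteSpace E]
    {f : ℕ → α → E} {F : α → E}
    (hf : ∀ k, Integrable (f k) μ) (hF : Integrable F μ)
    (h_norm : ∀ᵐ x ∂μ, HasSum (fun k => ‖f k x‖) ‖F x‖)
    (h_sum : ∀ᵐ x ∂μ, HasSum (fun k => f k x) (F x)) :
    HasSum (fun k => ∫ x, f k x ∂μ) (∫ x, F x ∂μ) := by
  have H := hasSum_integral_of_summable_integral_norm hf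
    (summable_integral_norm_of_hasSum_norm hf hF h_norm)
  rwa [integral_congr_ae (h_sum.mono fun x hx => hx.tsum_eq)] at H

lemma hasSum_integral_mul_of_nonneg {P : α → ℝ} {g : ℕ → α → ℝ} {G : α → ℝ}
    (hPg : ∀ k, Integrable (fun x => P x * g k x) μ) (hPG : Integrable (fun x => P x * G x) μ)
    (hg_nonneg : ∀ᵐ x ∂μ, ∀ k, 0 ≤ g k x) (hg : ∀ᵐ x ∂μ, HasSum (fun k => g k x) (G x)) :
    HasSum (fun k => ∫ x, P x * g k x ∂μ) (∫ x, P x * G x ∂μ) := by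
  refine hasSum_integral_of_hasSum_norm hPg hPG ?_ (hg.mono fun x hx => hx.mul_left (P x))
  filter_upwards [hg_nonneg, hg] with x hx_nonneg hx
  have hG_nonneg : 0 ≤ G x := hasSum_le hx_nonneg hasSum_zero hx
  simp only [norm_mul, Real.norm_of_nonneg (hx_nonneg _), Real.norm_of_nonneg hG_nonneg]
  exact hx.mul_left ‖P x‖

end TermwiseIntegration

lemma hasSum_choose_add_sub_one_mul_pow {𝕜 : Type*} [NormedDivisionRing 𝕜] [CompleteSpace 𝕜]
    {N : ℕ} (hN : 1 ≤ N) {r : 𝕜} (hr : ‖r‖ < 1) :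
    HasSum (fun k => ((k + N - 1).choose (N - 1) : 𝕜) * r ^ k) (1 / (1 - r) ^ N) := by
  obtain ⟨M, rfl⟩ := Nat.exists_eq_add_of_le' hN
  simpa [← add_assoc] using hasSum_choose_mul_geometric_of_norm_lt_one M hr

section UnitCube

variable {n : ℕ}

lemma measurableSet_unitCube : MeasurableSet (unitCube n) :=
  MeasurableSet.univ_pi fun _ => measurableSet_Ioo

lemma prod_nonneg_of_mem_unitCube {x : Fin n → ℝ} (hx : x ∈ unitCube n) : 0 ≤ ∏ i, x i :=
  Finset.prod_nonneg fun i _ => (hx i (Set.mem_univ i)).1.le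

lemma prod_lt_one_of_mem_unitCube (hn : n ≠ 0) {x : Fin n → ℝ} (hx : x ∈ unitCube n) :
    ∏ i, x i < 1 := by
  have : Nonempty (Fin n) := ⟨⟨0, Nat.pos_of_ne_zero hn⟩⟩
  calc ∏ i, x i < ∏ _i : Fin n, (1 : ℝ) :=
        Finset.prod_lt_prod_of_nonempty (fun i _ => (hx i (Set.mem_univ i)).1)
          (fun i _ => (hx i (Set.mem_univ i)).2) Finset.univ_nonempty
    _ = 1 := Finset.prod_const_one

lemma volume_restrict_unitCube :
    volume.restrict (unitCube n) = Measure.pi fun _ => volume.restrict (Set.Ioo (0 : ℝ) 1) := by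
  rw [unitCube, volume_pi, Measure.restrict_pi_pi]

lemma integrableOn_unitCube_prod_pow (b : Fin n → ℕ) :
    IntegrableOn (fun x : Fin n → ℝ => ∏ i, x i ^ b i) (unitCube n) := by
  rw [IntegrableOn, volume_restrict_unitCube]
  exact Integrable.fintype_prod fun i =>
    (continuous_pow (b i)).integrableOn_Icc.mono_set Set.Ioo_subset_Icc_self

lemma setIntegral_unitCube_prod_pow (b : Fin n → ℕ) :
    ∫ x in unitCube n, ∏ i, x i ^ b i = ∏ i, ((b i : ℝ) + 1)⁻¹ := by
  rw [volume_restrict_unitCube, integral_fintype_prod_eq_prod (fun i (y : ℝ) => y ^ b i)]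
  refine Finset.prod_congr rfl fun i _ => ?_
  rw [← integral_Ioc_eq_integral_Ioo, ← intervalIntegral.integral_of_le zero_le_one,
    integral_pow]
  norm_num

variable {ι : Type*} [Fintype ι]

lemma sum_prod_pow_mul_pow_prod (lam : ι → ℝ) (e : ι → Fin n → ℕ) (c : ℝ) (k : ℕ)
    (x : Fin n → ℝ) :
    (∑ j, lam j * ∏ i, x i ^ e j i) * (c * (∏ i, x i) ^ k)
      = ∑ j, lam j * c * ∏ i, x i ^ (e j i + k) := by
  simp only [Finset.sum_mul, pow_add, Finset.prod_mul_distrib, Finset.prod_pow]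
  exact Finset.sum_congr rfl fun j _ => by ring

lemma integrableOn_unitCube_sum_mul_prod_pow (lam : ι → ℝ) (e : ι → Fin n → ℕ) (c : ℝ) (k : ℕ) :
    IntegrableOn (fun x : Fin n → ℝ => (∑ j, lam j * ∏ i, x i ^ e j i) * (c * (∏ i, x i) ^ k))
      (unitCube n) := by
  simp only [sum_prod_pow_mul_pow_prod]
  exact integrable_finsetSum _ fun j _ => (integrableOn_unitCube_prod_pow _).const_mul _

lemma setIntegral_unitCube_sum_mul_prod_pow (lam : ι → ℝ) (a : ι → Fin n → ℕ)
    (ha : ∀ j i, 1 ≤ a j i) (c : ℝ) (k : ℕ) :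
    ∫ x in unitCube n, (∑ j, lam j * ∏ i, x i ^ (a j i - 1)) * (c * (∏ i, x i) ^ k)
      = ∑ j, lam j * c / ∏ i, ((k : ℝ) + a j i) := by
  simp only [sum_prod_pow_mul_pow_prod]
  rw [integral_finsetSum _ fun j _ => (integrableOn_unitCube_prod_pow _).const_mul _]
  refine Finset.sum_congr rfl fun j _ => ?_
  rw [integral_const_mul, setIntegral_unitCube_prod_pow, Finset.prod_inv_distrib, div_eq_mul_inv]
  congr 2
  refine Finset.prod_congr rfl fun i _ => ?_
  push_cast [Nat.cast_sub (ha j i)]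
  ring

end UnitCube

theorem stmt14 (n N m : ℕ) (hn : 1 ≤ n) (hN : 1 ≤ N)
    (a : Fin m → Fin n → ℕ) (ha : ∀ j i, 1 ≤ a j i) (lam : Fin m → ℚ)
    (hint : IntegrableOn (fun x : Fin n → ℝ =>
      (∑ j, (lam j : ℝ) * ∏ i, x i ^ (a j i - 1)) / (1 - ∏ i, x i) ^ N) (unitCube n)) :
    Summable (fun k : ℕ =>
      |∑ j, (lam j : ℝ) * (Nat.choose (k + N - 1) (N - 1) : ℝ)
        / ∏ i, ((k : ℝ) + (a j i : ℝ))|) ∧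
    (∫ x in unitCube n,
        (∑ j, (lam j : ℝ) * ∏ i, x i ^ (a j i - 1)) / (1 - ∏ i, x i) ^ N)
      = ∑' k : ℕ, ∑ j, (lam j : ℝ) * (Nat.choose (k + N - 1) (N - 1) : ℝ)
          / ∏ i, ((k : ℝ) + (a j i : ℝ)) := by
  have h_series : ∀ᵐ x ∂volume.restrict (unitCube n),
      HasSum (fun k => ((k + N - 1).choose (N - 1) : ℝ) * (∏ i, x i) ^ k)
        (1 / (1 - ∏ i, x i) ^ N) := by
    refine ae_restrict_of_forall_mem measurableSet_unitCube fun x hx => ?_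
    refine hasSum_choose_add_sub_one_mul_pow hN ?_
    rw [Real.norm_of_nonneg (prod_nonneg_of_mem_unitCube hx)]
    exact prod_lt_one_of_mem_unitCube (by omega) hx
  have h_coeff_nonneg : ∀ᵐ x ∂volume.restrict (unitCube n),
      ∀ k, 0 ≤ ((k + N - 1).choose (N - 1) : ℝ) * (∏ i, x i) ^ k :=
    ae_restrict_of_forall_mem measurableSet_unitCube fun x hx k =>
      mul_nonneg (Nat.cast_nonneg _) (pow_nonneg (prod_nonneg_of_mem_unitCube hx) k)
  have H := hasSum_integral_mul_of_nonneg
    (fun k => integrableOn_unitCube_sum_mul_prod_pow (fun j => (lam j : ℝ)) _ _ k)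
    (by simpa only [mul_one_div, IntegrableOn] using hint) h_coeff_nonneg h_series
  simp only [mul_one_div, setIntegral_unitCube_sum_mul_prod_pow _ a ha] at H
  exact ⟨H.summable.abs, H.tsum_eq.symm⟩
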